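/- arXiv:1202.1324 — 2 statements merged into one kernel-verified Lean document; each statement's English description precedes it below -/
import Mathlib

section
/- Let Qₙ be the algebra of 'fractional polynomials' on [0,∞)ⁿ, i.e., finite complex linear combinations of monomials t^α = t₁^{α₁}⋯tₙ^{αₙ} with exponents α ∈ (ℚ₊)ⁿ. Fix real fractional polynomials p₁, …, p_m ∈ Qₙ and set θ(t) = (1 + t₁² + ⋯ + tₙ² + p₁(t)² + ⋯ + p_m(t)²)^{-1}. Let R be the complex algebra of functions on [0,∞)ⁿ generated by Qₙ and θ. Then the homomorphism ρ from the algebra generated by Qₙ and the polynomials in one extra nonnegative real variable s, defined by ρ(p)(t) = p(t, θ(t)), is surjective onto R, and its kernel is the ideal generated by the function σ(t, s) = s·θ(t)^{-1} − 1. -/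
open MeasureTheory
open scoped ComplexOrder

/-- Points of `[0,∞)ⁿ`. -/
abbrev NNVec (n : ℕ) := {t : Fin n → ℝ // ∀ j, 0 ≤ t j}

/-- The real fractional monomial `t ↦ t^α = t₁^{α₁} ⋯ tₙ^{αₙ}` on `[0,∞)ⁿ`
(real powers; the convention `0^0 = 1` is in force). -/
noncomputable def fracMonoR {n : ℕ} (α : Fin n → ℚ) (t : NNVec n) : ℝ :=
  ∏ j, (t.1 j) ^ ((α j : ℝ))

/-- The fractional monomial `t ↦ t^α`, regarded as a complex-valued function. -/
noncomputable def fracMono {n : ℕ} (α : Fin n → ℚ) (t : NNVec n) : ℂ :=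
  ((fracMonoR α t : ℝ) : ℂ)

/-- The set of fractional monomials with nonnegative rational exponents. -/
def fracMonoSet (n : ℕ) : Set (NNVec n → ℂ) :=
  {f | ∃ α : Fin n → ℚ, (∀ j, 0 ≤ α j) ∧ f = fracMono α}

/-- `Qₙ`: the complex algebra of "fractional polynomials" on `[0,∞)ⁿ`, i.e. the algebra
generated by the fractional monomials `t^α`, `α ∈ (ℚ₊)ⁿ`. -/
noncomputable def QAlg (n : ℕ) : Subalgebra ℂ (NNVec n → ℂ) :=
  Algebra.adjoin ℂ (fracMonoSet n)

/-- A real-valued function on `[0,∞)ⁿ` is a *real fractional polynomial* if, viewed as a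
complex-valued function, it belongs to `Qₙ`. -/
def IsRealFracPoly {n : ℕ} (p : NNVec n → ℝ) : Prop :=
  (fun t => ((p t : ℝ) : ℂ)) ∈ QAlg n

/-- `θ_p(t) = (1 + t₁² + ⋯ + tₙ² + p₁(t)² + ⋯ + p_m(t)²)⁻¹`. -/
noncomputable def thetaFn {n m : ℕ} (p : Fin m → (NNVec n → ℝ)) (t : NNVec n) : ℝ :=
  (1 + ∑ j, (t.1 j) ^ 2 + ∑ k, (p k t) ^ 2)⁻¹

/-- `R`: the complex algebra generated by `Qₙ` together with the function `θ_p`. -/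
noncomputable def RAlg (n m : ℕ) (p : Fin m → (NNVec n → ℝ)) : Subalgebra ℂ (NNVec n → ℂ) :=
  Algebra.adjoin ℂ (fracMonoSet n ∪ {fun t => ((thetaFn p t : ℝ) : ℂ)})

/-- The fractional monomials in the first `n` coordinates, as functions on `[0,∞)^{n+1}`. -/
def fracMonoSetFront (n : ℕ) : Set (NNVec (n + 1) → ℂ) :=
  {f | ∃ α : Fin n → ℚ, (∀ j, 0 ≤ α j) ∧
    f = fun x => ((∏ j, (x.1 j.castSucc) ^ ((α j : ℝ)) : ℝ) : ℂ)}

/-- `Q̃ₙ`: the complex algebra generated by `Qₙ` (in the variables `t₁, …, tₙ`) and the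
polynomials in one extra nonnegative real variable `s` (the last coordinate). -/
noncomputable def QtildeAlg (n : ℕ) : Subalgebra ℂ (NNVec (n + 1) → ℂ) :=
  Algebra.adjoin ℂ
    (fracMonoSetFront n ∪ {fun x => ((x.1 (Fin.last n) : ℝ) : ℂ)})

/-- Restriction of a point of `[0,∞)^{n+1}` to its first `n` coordinates. -/
def NNVec.front {n : ℕ} (x : NNVec (n + 1)) : NNVec n :=
  ⟨fun j => x.1 j.castSucc, fun j => x.2 j.castSucc⟩

/-- The embedding `t ↦ (t, θ_p(t))` of `[0,∞)ⁿ` into `[0,∞)^{n+1}`; precomposition with it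
is the substitution homomorphism `ρ : p(t, s) ↦ p(t, θ_p(t))`. -/
noncomputable def embTheta {n m : ℕ} (p : Fin m → (NNVec n → ℝ)) (t : NNVec n) :
    NNVec (n + 1) :=
  ⟨Fin.snoc t.1 (thetaFn p t), by
    intro j
    induction j using Fin.lastCases with
    | last =>
      rw [Fin.snoc_last]
      exact inv_nonneg.mpr (by positivity)
    | cast i =>
      rw [Fin.snoc_castSucc]
      exact t.2 i⟩

/-!
`ρ` is precomposition with `t ↦ (t, θ(t))`, an algebra homomorphism, so it maps `Q̃ₙ`, generated
by the `t^α` and `s`, onto the algebra generated by the `t^α` and `θ`, which is `R`.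

For the kernel, `θ⁻¹ = 1 + ∑ tⱼ² + ∑ pₖ²` lies in `Qₙ`, so `σ = θ⁻¹ s - 1` is a polynomial in `s`
over `Qₙ`. Write `f ∈ Q̃ₙ` as such a polynomial of degree `N`. Modulo `σ` the variable `s` is
invertible with inverse `θ⁻¹`, so `sⁱ ≡ θ^{i-N} s^N` and `f = g σ + c s^N` with `g ∈ Q̃ₙ`, `c ∈ Qₙ`.
If `ρ f = 0`, then `c θ^N = 0`, and `θ > 0` forces `c = 0`.
-/

open Polynomial

theorem Polynomial.exists_C_mul_X_sub_one_dvd_sub_C_mul_X_pow {A : Type*} [CommRing A]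
    (w : A) (P : A[X]) : ∃ c : A, C w * X - 1 ∣ P - C c * X ^ P.natDegree := by
  set N := P.natDegree
  refine ⟨∑ i ∈ Finset.range (N + 1), P.coeff i * w ^ (N - i), ?_⟩
  have hterm : ∀ i ∈ Finset.range (N + 1),
      C (P.coeff i) * X ^ i - C (P.coeff i * w ^ (N - i)) * X ^ N
        = -(C (P.coeff i) * X ^ i) * ((C w * X) ^ (N - i) - 1) := by
    intro i hi
    rw [← Nat.add_sub_of_le (Finset.mem_range_succ_iff.mp hi), pow_add, Nat.add_sub_cancel_left,
      mul_pow, C_mul, C_pow]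
    ring
  conv_rhs => arg 1; rw [P.as_sum_range_C_mul_X_pow]
  rw [map_sum, Finset.sum_mul, ← Finset.sum_sub_distrib, Finset.sum_congr rfl hterm]
  exact Finset.dvd_sum fun i _ => dvd_mul_of_dvd_right (sub_one_dvd_pow_sub_one _ _) _

def precompAlgHom (R : Type*) {A X Y : Type*} [CommSemiring R] [Semiring A] [Algebra R A]
    (f : X → Y) : (Y → A) →ₐ[R] (X → A) :=
  AlgHom.pi fun x => Pi.evalAlgHom R (fun _ => A) (f x)

@[simp]
theorem precompAlgHom_apply (R : Type*) {A X Y : Type*} [CommSemiring R] [Semiring A]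
    [Algebra R A] (f : X → Y) (g : Y → A) (x : X) : precompAlgHom R f g x = g (f x) :=
  rfl

section

variable {n m : ℕ}

def lastCoord (n : ℕ) (x : NNVec (n + 1)) : ℂ := ((x.1 (Fin.last n) : ℝ) : ℂ)

theorem lastCoord_mem_QtildeAlg : lastCoord n ∈ QtildeAlg n :=
  Algebra.subset_adjoin (Or.inr rfl)

theorem precomp_front_mem_QtildeAlg {g : NNVec n → ℂ} (hg : g ∈ QAlg n) :
    precompAlgHom ℂ NNVec.front g ∈ QtildeAlg n := by
  suffices (QAlg n).map (precompAlgHom ℂ NNVec.front) ≤ QtildeAlg n from this ⟨g, hg, rfl⟩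
  rw [QAlg, AlgHom.map_adjoin]
  refine Algebra.adjoin_le ?_
  rintro _ ⟨_, ⟨α, hα, rfl⟩, rfl⟩
  exact Algebra.subset_adjoin (Or.inl ⟨α, hα, rfl⟩)

noncomputable def evalLast (n : ℕ) : (QAlg n)[X] →ₐ[ℂ] (NNVec (n + 1) → ℂ) :=
  eval₂AlgHom ((precompAlgHom ℂ NNVec.front).comp (QAlg n).val) (lastCoord n)
    fun _ => Commute.all _ _

@[simp]
theorem evalLast_C (a : QAlg n) : evalLast n (C a) = precompAlgHom ℂ NNVec.front a := by
  simp [evalLast]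

@[simp]
theorem evalLast_X : evalLast n X = lastCoord n := by
  simp [evalLast]

theorem QtildeAlg_eq_range_evalLast : QtildeAlg n = (evalLast n).range := by
  apply le_antisymm
  · refine Algebra.adjoin_le ?_
    rintro f (⟨α, hα, rfl⟩ | rfl)
    · exact ⟨C ⟨fracMono α, Algebra.subset_adjoin ⟨α, hα, rfl⟩⟩, evalLast_C _⟩
    · exact ⟨X, evalLast_X⟩
  · rintro _ ⟨P, rfl⟩
    change evalLast n P ∈ QtildeAlg n
    induction P using Polynomial.induction_on' with
    | add P Q hP hQ => rw [map_add]; exact add_mem hP hQ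
    | monomial k a =>
      rw [← C_mul_X_pow_eq_monomial, map_mul, map_pow, evalLast_C, evalLast_X]
      exact mul_mem (precomp_front_mem_QtildeAlg a.2) (pow_mem lastCoord_mem_QtildeAlg k)

theorem thetaFn_pos (p : Fin m → (NNVec n → ℝ)) (t : NNVec n) : 0 < thetaFn p t :=
  inv_pos.mpr (by positivity)

@[simp]
theorem front_embTheta (p : Fin m → (NNVec n → ℝ)) (t : NNVec n) :
    (embTheta p t).front = t := by
  ext j
  simp [NNVec.front, embTheta]

@[simp]
theorem lastCoord_embTheta (p : Fin m → (NNVec n → ℝ)) (t : NNVec n) :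
    lastCoord n (embTheta p t) = thetaFn p t := by
  simp [lastCoord, embTheta]

theorem map_QtildeAlg_precomp_embTheta (p : Fin m → (NNVec n → ℝ)) :
    (QtildeAlg n).map (precompAlgHom ℂ (embTheta p)) = RAlg n m p := by
  rw [QtildeAlg, AlgHom.map_adjoin, Set.image_union, Set.image_singleton, RAlg]
  congr 2
  · ext f
    constructor
    · rintro ⟨_, ⟨α, hα, rfl⟩, rfl⟩
      exact ⟨α, hα, _root_.funext fun t => by simp [fracMono, fracMonoR, embTheta]⟩
    · rintro ⟨α, hα, rfl⟩
      exact ⟨_, ⟨α, hα, rfl⟩, _root_.funext fun t => by simp [fracMono, fracMonoR, embTheta]⟩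
  · exact congrArg _ (_root_.funext (lastCoord_embTheta p))

noncomputable def thetaInv (p : Fin m → (NNVec n → ℝ)) (t : NNVec n) : ℂ :=
  (((thetaFn p t)⁻¹ : ℝ) : ℂ)

theorem coord_sq_mem_QAlg (j : Fin n) :
    (fun t : NNVec n => (((t.1 j) ^ 2 : ℝ) : ℂ)) ∈ QAlg n := by
  refine Algebra.subset_adjoin ⟨Pi.single j 2, fun i => ?_, _root_.funext fun t => ?_⟩
  · by_cases h : i = j <;> simp [h]
  · rw [fracMono, fracMonoR, Finset.prod_eq_single j (fun i _ hi => by simp [hi]) (by simp)]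
    norm_num

theorem thetaInv_mem_QAlg {p : Fin m → (NNVec n → ℝ)} (hp : ∀ k, IsRealFracPoly (p k)) :
    thetaInv p ∈ QAlg n := by
  have h : thetaInv p = 1 + ∑ j, (fun t : NNVec n => (((t.1 j) ^ 2 : ℝ) : ℂ))
      + ∑ k, (fun t => ((p k t : ℝ) : ℂ)) ^ 2 := by
    ext t
    simp [thetaInv, thetaFn]
  rw [h]
  exact add_mem (add_mem (one_mem _) (sum_mem fun j _ => coord_sq_mem_QAlg j))
    (sum_mem fun k _ => pow_mem (hp k) 2)

theorem lastCoord_embTheta_mul_thetaInv (p : Fin m → (NNVec n → ℝ)) (t : NNVec n) :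
    lastCoord n (embTheta p t) * thetaInv p t = 1 := by
  rw [lastCoord_embTheta, thetaInv, ← Complex.ofReal_mul, mul_inv_cancel₀ (thetaFn_pos p t).ne',
    Complex.ofReal_one]

theorem exists_eq_mul_sigma_of_forall_embTheta_eq_zero {p : Fin m → (NNVec n → ℝ)}
    (hp : ∀ k, IsRealFracPoly (p k)) {f : NNVec (n + 1) → ℂ} (hf : f ∈ QtildeAlg n)
    (hf0 : ∀ t, f (embTheta p t) = 0) :
    ∃ g ∈ QtildeAlg n, f = g * fun x => lastCoord n x * thetaInv p x.front - 1 := by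
  rw [QtildeAlg_eq_range_evalLast] at hf ⊢
  obtain ⟨P, rfl⟩ := hf
  obtain ⟨c, G, hG⟩ :=
    exists_C_mul_X_sub_one_dvd_sub_C_mul_X_pow ⟨thetaInv p, thetaInv_mem_QAlg hp⟩ P
  have hfG := congrArg (evalLast n) hG
  -- `map_sub` needs the hom explicitly: the subtraction in `hG` comes from `CommRing (QAlg n)`,
  -- which is not reducibly the ring structure `evalLast` was built on.
  simp only [map_sub (evalLast n), map_mul, map_pow, map_one, evalLast_C, evalLast_X] at hfG
  change ∀ t, evalLast n P (embTheta p t) = 0 at hf0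
  have hc : ∀ t, (c : NNVec n → ℂ) t = 0 := by
    intro t
    have h := congrFun hfG (embTheta p t)
    simp only [Pi.sub_apply, Pi.mul_apply, Pi.pow_apply, Pi.one_apply, precompAlgHom_apply,
      front_embTheta, hf0, mul_comm (thetaInv p t), lastCoord_embTheta_mul_thetaInv] at h
    have hθ : (thetaFn p t : ℂ) ^ P.natDegree ≠ 0 :=
      pow_ne_zero _ (Complex.ofReal_ne_zero.mpr (thetaFn_pos p t).ne')
    rw [lastCoord_embTheta] at h
    exact (mul_eq_zero.mp (by linear_combination -h)).resolve_right hθ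
  refine ⟨evalLast n G, ⟨G, rfl⟩, _root_.funext fun x => ?_⟩
  have h := congrFun hfG x
  simp only [Pi.sub_apply, Pi.mul_apply, Pi.pow_apply, Pi.one_apply, precompAlgHom_apply,
    hc, zero_mul, sub_zero] at h
  rw [Pi.mul_apply]
  linear_combination h

end

/-- The substitution map `ρ : Q̃ₙ → R`, `ρ(p)(t) = p(t, θ(t))` (an algebra
homomorphism, being precomposition with `t ↦ (t, θ(t))`), maps `Q̃ₙ` onto the algebra `R`
generated by `Qₙ` and `θ`, and its kernel is the ideal of `Q̃ₙ` generated by the function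
`σ(t, s) = s·θ(t)⁻¹ − 1`; i.e. `ρ(f) = 0` iff `f = g·σ` for some `g ∈ Q̃ₙ`. -/
theorem rho_surjective_and_kernel (n m : ℕ)
    (p : Fin m → (NNVec n → ℝ)) (hp : ∀ k, IsRealFracPoly (p k)) :
    (∀ f ∈ QtildeAlg n, (fun t => f (embTheta p t)) ∈ RAlg n m p) ∧
    (∀ r ∈ RAlg n m p, ∃ f ∈ QtildeAlg n, ∀ t, f (embTheta p t) = r t) ∧
    (∀ f ∈ QtildeAlg n,
      ((∀ t, f (embTheta p t) = 0) ↔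
        ∃ g ∈ QtildeAlg n,
          f = g * fun x => (((x.1 (Fin.last n) : ℝ) : ℂ) *
            (((thetaFn p x.front)⁻¹ : ℝ) : ℂ) - 1))) := by
  have hmap := map_QtildeAlg_precomp_embTheta p
  refine ⟨fun f hf => hmap ▸ ⟨f, hf, rfl⟩, fun r hr => ?_, fun f hf =>
    ⟨exists_eq_mul_sigma_of_forall_embTheta_eq_zero hp hf, ?_⟩⟩
  · obtain ⟨f, hf, rfl⟩ := hmap ▸ hr
    exact ⟨f, hf, fun t => rfl⟩
  · rintro ⟨g, -, rfl⟩ t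
    rw [Pi.mul_apply, front_embTheta]
    exact mul_eq_zero_of_right _ (sub_eq_zero.mpr (lastCoord_embTheta_mul_thetaInv p t))
end

section
/- Let A be a positive selfadjoint operator on a complex Hilbert space, ℓ a positive integer, and B a positive selfadjoint operator with B^ℓ = A. Then B = A^{1/ℓ}; i.e., the positive selfadjoint ℓ-th root of a positive selfadjoint operator is unique. -/
open scoped InnerProductSpace

/-- A projection-valued (spectral) measure on the Borel subsets of `ℝ`, acting on a
complex Hilbert space `H`.  By the spectral theorem, selfadjoint operators on `H`
correspond bijectively to such spectral measures; an operator is positive iff its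
spectral measure is supported on `[0,∞)`. -/
structure SpectralMeasure (H : Type*) [NormedAddCommGroup H] [InnerProductSpace ℂ H]
    [CompleteSpace H] where
  proj : Set ℝ → (H →L[ℂ] H)
  proj_empty : proj ∅ = 0
  proj_univ : proj Set.univ = 1
  proj_selfAdjoint : ∀ s, MeasurableSet s → IsSelfAdjoint (proj s)
  proj_inter : ∀ s t, MeasurableSet s → MeasurableSet t →
    proj (s ∩ t) = (proj s).comp (proj t)
  proj_iUnion : ∀ (f : ℕ → Set ℝ), (∀ i, MeasurableSet (f i)) →
    Pairwise (Function.onFun Disjoint f) →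
    ∀ x : H, HasSum (fun i => proj (f i) x) (proj (⋃ i, f i) x)

/-- The spectral measure of the power `A^q` (defined via the Borel functional calculus
applied to `t ↦ t^q` on `[0,∞)`) of the positive selfadjoint operator with spectral
measure `E`: on a Borel set `δ` it is `E({t ≥ 0 : t^q ∈ δ})`, i.e. `E(δ^{1/q})`. -/
noncomputable def SpectralMeasure.powProj {H : Type*} [NormedAddCommGroup H]
    [InnerProductSpace ℂ H] [CompleteSpace H]
    (E : SpectralMeasure H) (q : ℝ) (δ : Set ℝ) : H →L[ℂ] H :=
  E.proj {t : ℝ | t ∈ Set.Ici (0 : ℝ) ∧ t ^ q ∈ δ}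

/-- Let `A` be a positive selfadjoint operator on a complex Hilbert space
(identified, via the spectral theorem, with its spectral measure supported on `[0,∞)`),
`ℓ` a positive integer, and `B` a positive selfadjoint operator with `B^ℓ = A`.
Then `B = A^{1/ℓ}` (the latter defined via the Borel functional calculus applied to
`t ↦ t^{1/ℓ}`); i.e., the positive selfadjoint `ℓ`-th root of a positive selfadjoint
operator is unique. -/
theorem positive_selfAdjoint_nth_root_unique
    {H : Type*} [NormedAddCommGroup H] [InnerProductSpace ℂ H] [CompleteSpace H]
    (A B : SpectralMeasure H) (hA : A.proj (Set.Ici 0) = 1) (hB : B.proj (Set.Ici 0) = 1)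
    (ℓ : ℕ) (hℓ : 0 < ℓ)
    (hroot : ∀ δ : Set ℝ, MeasurableSet δ → B.powProj (ℓ : ℝ) δ = A.proj δ) :
    ∀ δ : Set ℝ, MeasurableSet δ → B.proj δ = A.powProj ((ℓ : ℝ)⁻¹) δ := by
  intro δ hδ
  have hℓR : (ℓ : ℝ) ≠ 0 := Nat.cast_ne_zero.mpr hℓ.ne'
  set S : Set ℝ := {t : ℝ | t ∈ Set.Ici (0 : ℝ) ∧ t ^ ((ℓ : ℝ)⁻¹) ∈ δ} with hS
  have hSmeas : MeasurableSet S := by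
    exact measurableSet_Ici.inter ((Real.continuous_rpow_const (by positivity)).measurable hδ)
  have h1 : B.powProj (ℓ : ℝ) S = A.proj S := hroot S hSmeas
  have hset : {t : ℝ | t ∈ Set.Ici (0 : ℝ) ∧ t ^ (ℓ : ℝ) ∈ S} = Set.Ici (0 : ℝ) ∩ δ := by
    ext t
    simp only [hS, Set.mem_setOf_eq, Set.mem_Ici, Set.mem_inter_iff]
    constructor
    · rintro ⟨ht, -, hmem⟩
      rw [← Real.rpow_mul ht, mul_inv_cancel₀ hℓR,
        Real.rpow_one] at hmem
      exact ⟨ht, hmem⟩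
    · rintro ⟨ht, hmem⟩
      refine ⟨ht, Real.rpow_nonneg ht _, ?_⟩
      rw [← Real.rpow_mul ht, mul_inv_cancel₀ hℓR,
        Real.rpow_one]
      exact hmem
  have h2 : B.proj (Set.Ici (0 : ℝ) ∩ δ) = B.proj δ := by
    rw [B.proj_inter _ _ measurableSet_Ici hδ, hB]
    rfl
  calc B.proj δ = B.proj (Set.Ici (0 : ℝ) ∩ δ) := h2.symm
    _ = B.powProj (ℓ : ℝ) S := by rw [SpectralMeasure.powProj, hset]
    _ = A.powProj ((ℓ : ℝ)⁻¹) δ := h1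
end
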